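/- Let A be a one-generator left brace and x ∈ A such that A = A(x). Then λ_x(x) = x if and only if A is a trivial left brace whose additive group (A,+) is generated by x. -/

import Mathlib

/-- A left brace structure on a type carrying an abelian additive group structure `+`
and a (multiplicative) group structure `∘` (written `*`). -/
class LeftBrace (A : Type*) [AddCommGroup A] [Group A] : Prop where
  compat : ∀ a b c : A, a * (b + c) + a = a * b + a * c

section Brace

variable {A : Type*} [AddCommGroup A] [Group A]

/-- The map `λ_a : b ↦ -a + a ∘ b`, as a permutation of `A`. -/
def lam (a : A) : Equiv.Perm A where
  toFun b := -a + a * b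
  invFun b := a⁻¹ * (a + b)
  left_inv b := by simp
  right_inv b := by simp

/-- A subset of a left brace is a sub-left-brace if it is simultaneously (the carrier of)
a subgroup of `(A,+)` and a subgroup of `(A,∘)`. -/
def IsSubBrace (B : Set A) : Prop :=
  ∃ (Sa : AddSubgroup A) (Sm : Subgroup A), (Sa : Set A) = B ∧ (Sm : Set A) = B

/-- `A(x)`: the smallest sub-left-brace containing `x`. -/
def braceClosure (x : A) : Set A := ⋂₀ {B : Set A | IsSubBrace B ∧ x ∈ B}

end Brace

/-- The socle series of a left brace: `Soc_0 = {0}`,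
`Soc_{n+1} = {a | ∀ b, a + b - a∘b ∈ Soc_n}`. -/
def socSeq (A : Type*) [AddCommGroup A] [Group A] : ℕ → Set A
  | 0 => {0}
  | n + 1 => {a | ∀ b, a + b - a * b ∈ socSeq A n}

/-- A left brace has multipermutation level `n` if `n` is minimal with `Soc_n(A) = A`. -/
def BraceMPL (A : Type*) [AddCommGroup A] [Group A] (n : ℕ) : Prop :=
  socSeq A n = Set.univ ∧ ∀ m < n, socSeq A m ≠ Set.univ

/-! If `λ_x(x) = x`, then `λ_x` fixes every integer multiple of `x`, and so does
`λ_{x⁻¹} = λ_x⁻¹`. Hence `x ∘ (n x) = x + n x` and `x⁻¹ ∘ (n x) = -x + n x`, so the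
`∘`-powers of `x` are its additive multiples. The cyclic subgroup `ℤ x` is then a sub-brace
containing `x`, hence all of `A`, and on it `∘` and `+` agree. -/

section

variable {A : Type*} [AddCommGroup A] [Group A]

theorem braceClosure_subset {x : A} {B : Set A} (hB : IsSubBrace B) (hxB : x ∈ B) :
    braceClosure x ⊆ B :=
  Set.sInter_subset_of_mem ⟨hB, hxB⟩

theorem lam_apply (a b : A) : lam a b = -a + a * b := rfl

theorem mul_eq_add_of_lam_apply_eq {a b : A} (h : lam a b = b) : a * b = a + b := by
  rwa [lam_apply, neg_add_eq_iff_eq_add] at h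

end

namespace LeftBrace

variable {A : Type*} [AddCommGroup A] [Group A] [LeftBrace A]

theorem mul_add_eq (a b c : A) : a * (b + c) = a * b + a * c - a :=
  eq_sub_of_add_eq (compat a b c)

theorem mul_zero_eq_self (a : A) : a * 0 = a := by
  simpa using compat a 0 0

theorem one_eq_zero : (1 : A) = 0 := by
  simpa using (mul_zero_eq_self (1 : A)).symm

theorem mul_neg_eq (a b : A) : a * -b = a + a - a * b := by
  have h := mul_add_eq a b (-b)
  rw [add_neg_cancel, mul_zero_eq_self] at h
  rw [eq_sub_iff_add_eq', ← sub_eq_iff_eq_add.mp h.symm, add_comm]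

theorem lam_add (a b c : A) : lam a (b + c) = lam a b + lam a c := by
  simp only [lam_apply, mul_add_eq]
  abel

theorem lam_zsmul (a b : A) (n : ℤ) : lam a (n • b) = n • lam a b :=
  (AddMonoidHom.mk' (lam a) (lam_add a)).map_zsmul n b

theorem lam_one_apply (b : A) : lam 1 b = b := by
  rw [lam_apply, one_mul, one_eq_zero, neg_zero, zero_add]

theorem lam_mul_apply (a b c : A) : lam (a * b) c = lam a (lam b c) := by
  simp only [lam_apply, mul_add_eq, mul_neg_eq, mul_assoc]
  abel

theorem lam_inv_apply_eq_of_lam_apply_eq {a b : A} (h : lam a b = b) : lam a⁻¹ b = b := by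
  conv_lhs => rw [← h, ← lam_mul_apply, inv_mul_cancel, lam_one_apply]

section FixedGenerator

variable {x : A} (hx : lam x x = x)
include hx

theorem lam_apply_zsmul_self (n : ℤ) : lam x (n • x) = n • x := by
  rw [lam_zsmul, hx]

theorem inv_eq_neg_of_lam_apply_self : x⁻¹ = -x := by
  have h := mul_eq_add_of_lam_apply_eq (lam_inv_apply_eq_of_lam_apply_eq hx)
  rw [inv_mul_cancel, one_eq_zero] at h
  exact eq_neg_of_add_eq_zero_left h.symm

theorem zpow_eq_zsmul_of_lam_apply_self (n : ℤ) : x ^ n = n • x := by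
  induction n using Int.induction_on with
  | zero => rw [zpow_zero, zero_smul, one_eq_zero]
  | succ k ih =>
    rw [add_comm, zpow_add, zpow_one, ih,
      mul_eq_add_of_lam_apply_eq (lam_apply_zsmul_self hx k), add_smul, one_smul, add_comm]
  | pred k ih =>
    rw [sub_eq_neg_add, zpow_add, zpow_neg_one, ih,
      mul_eq_add_of_lam_apply_eq (lam_inv_apply_eq_of_lam_apply_eq (lam_apply_zsmul_self hx _)),
      inv_eq_neg_of_lam_apply_self hx, add_smul, neg_one_smul]

theorem isSubBrace_zmultiples_of_lam_apply_self :
    IsSubBrace (AddSubgroup.zmultiples x : Set A) := by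
  refine ⟨_, Subgroup.zpowers x, rfl, ?_⟩
  ext a
  simp only [SetLike.mem_coe, Subgroup.mem_zpowers_iff, AddSubgroup.mem_zmultiples_iff,
    zpow_eq_zsmul_of_lam_apply_self hx]

theorem zmultiples_eq_top_of_lam_apply_self (hA : braceClosure x = Set.univ) :
    AddSubgroup.zmultiples x = ⊤ := by
  refine SetLike.coe_injective (Set.eq_univ_of_univ_subset ?_)
  rw [← hA]
  exact braceClosure_subset (isSubBrace_zmultiples_of_lam_apply_self hx)
    (AddSubgroup.mem_zmultiples x)

end FixedGenerator

end LeftBrace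

open LeftBrace in
/-- If `A = A(x)` is a one-generator left brace, then `λ_x(x) = x`
iff `A` is a trivial left brace whose additive group is generated by `x`. -/
theorem stmt16 {A : Type} [AddCommGroup A] [Group A] [LeftBrace A]
    (x : A) (hx : braceClosure x = Set.univ) :
    lam x x = x ↔
      ((∀ a b : A, a * b = a + b) ∧ AddSubgroup.closure ({x} : Set A) = ⊤) := by
  constructor
  · intro hfix
    have htop := zmultiples_eq_top_of_lam_apply_self hfix hx
    refine ⟨fun a b => ?_, by rwa [← AddSubgroup.zmultiples_eq_closure]⟩
    obtain ⟨n, rfl⟩ := AddSubgroup.mem_zmultiples_iff.mp (htop ▸ AddSubgroup.mem_top a)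
    obtain ⟨m, rfl⟩ := AddSubgroup.mem_zmultiples_iff.mp (htop ▸ AddSubgroup.mem_top b)
    calc n • x * m • x = x ^ (n + m) := by
          rw [zpow_add, zpow_eq_zsmul_of_lam_apply_self hfix, zpow_eq_zsmul_of_lam_apply_self hfix]
      _ = n • x + m • x := by rw [zpow_eq_zsmul_of_lam_apply_self hfix, add_smul]
  · rintro ⟨htriv, -⟩
    rw [lam_apply, htriv, neg_add_cancel_left]
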